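/- arXiv:math/0611721 — 3 statements merged into one kernel-verified Lean document; each statement's English description precedes it below -/
import Mathlib

section
/- Let L ≥ 1, and fix nonnegative integers I_1 ≤ … ≤ I_d and a total S with the constraint 2 Σ_j K_j = S. Suppose K = (K_1,…,K_d) with 0 ≤ K_j ≤ L solves the system h_{I_k}(K_k − 1) ≥ h_{I_j}(K_j) for all 1 ≤ j, k ≤ d, where h_n(a) = ((L−a)/(1+a))·((L−(a+n))/(1+(a+n))). If I_i < I_j, then K_j ≤ K_i. -/
set_option maxHeartbeats 1000000 in
theorem solution_monotone (d L : ℕ) (hL : 1 ≤ L)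
    (I K : Fin d → ℕ) (S : ℕ)
    (hImono : ∀ i j : Fin d, i ≤ j → I i ≤ I j)
    (hKL : ∀ j, K j ≤ L)
    (hsum : 2 * ∑ j, K j = S)
    (h : ℕ → ℝ → ℝ)
    (hdef : ∀ n : ℕ, ∀ a : ℝ, h n a =
      ((L - a) / (1 + a)) * ((L - (a + n)) / (1 + (a + n))))
    (hsys : ∀ j k : Fin d, h (I j) (K j) ≤ h (I k) ((K k : ℝ) - 1))
    (i j : Fin d) (hij : I i < I j) :
    K j ≤ K i := by
  by_contra hcon
  push_neg at hcon
  -- real versions of the variables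
  set A : ℝ := (K i : ℝ) with hAdef
  set B : ℝ := (K j : ℝ) with hBdef
  set M : ℝ := (I i : ℝ) with hMdef
  set Nr : ℝ := (I j : ℝ) with hNdef
  set Lr : ℝ := (L : ℝ) with hLdef
  have hA0 : (0:ℝ) ≤ A := by rw [hAdef]; positivity
  have hM0 : (0:ℝ) ≤ M := by rw [hMdef]; positivity
  have hAB : A + 1 ≤ B := by
    have : (K i : ℝ) + 1 ≤ (K j : ℝ) := by exact_mod_cast Nat.succ_le_of_lt hcon
    simpa [hAdef, hBdef] using this
  have hMN : M + 1 ≤ Nr := by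
    have : (I i : ℝ) + 1 ≤ (I j : ℝ) := by exact_mod_cast Nat.succ_le_of_lt hij
    simpa [hMdef, hNdef] using this
  have hBL : B ≤ Lr := by rw [hBdef, hLdef]; exact_mod_cast hKL j
  have hL1 : (1:ℝ) ≤ Lr := by rw [hLdef]; exact_mod_cast hL
  -- the two inequalities from the system
  have c1 := hsys i j
  have c4 := hsys j j
  rw [hdef, hdef] at c1
  rw [hdef, hdef] at c4
  -- positivity of all denominators
  have d1 : (0:ℝ) < 1 + A := by linarith
  have d2 : (0:ℝ) < 1 + (A + M) := by linarith
  have d3 : (0:ℝ) < 1 + (B - 1) := by linarith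
  have d4 : (0:ℝ) < 1 + (B - 1 + Nr) := by linarith
  have d5 : (0:ℝ) < 1 + B := by linarith
  have d6 : (0:ℝ) < 1 + (B + Nr) := by linarith
  have d7 : (0:ℝ) < 1 + (A + Nr) := by linarith
  -- clear denominators
  rw [div_mul_div_comm, div_mul_div_comm,
    div_le_div_iff₀ (by positivity) (by positivity)] at c1
  rw [div_mul_div_comm, div_mul_div_comm,
    div_le_div_iff₀ (by positivity) (by positivity)] at c4
  -- key discrete-unimodality inequality extracted from c4
  have hG : 0 ≤ (Lr + 1 - Nr) * (2*B + 1 + Nr) - 2*B*(B+1) := by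
    nlinarith [c4, hL1]
  have hW : 0 ≤ (Lr + 1 - Nr) * (1 + A + B + Nr) - 2*(1+A)*B := by
    nlinarith [mul_nonneg hG (show (0:ℝ) ≤ 1 + A + B + Nr by linarith),
      mul_nonneg (mul_nonneg (show (0:ℝ) ≤ B by linarith)
        (show (0:ℝ) ≤ B + Nr by linarith)) (show (0:ℝ) ≤ B - A by linarith),
      show (0:ℝ) < 2*B + 1 + Nr by linarith]
  -- ψ(A) ≤ ψ(B-1), cross-multiplied
  have hP2 : (Lr - A) * ((A + Nr) - Lr) * (B * (B + Nr)) ≤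
      ((Lr + 1) - B) * ((B + Nr) - (Lr + 1)) * ((1 + A) * (1 + (A + Nr))) := by
    nlinarith [mul_nonneg (mul_nonneg (show (0:ℝ) ≤ Lr + 1 by linarith)
      (show (0:ℝ) ≤ B - 1 - A by linarith)) hW]
  have hP2' := mul_le_mul_of_nonneg_right hP2 (le_of_lt d2)
  -- strict gain from M + 1 ≤ Nr
  have hP1 : (0:ℝ) < (Lr - A) * (B * (B + Nr)) * ((Nr - M) * (1 + Lr)) := by
    have h1 : (0:ℝ) < Lr - A := by linarith
    have h2 : (0:ℝ) < B := by linarith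
    have h3 : (0:ℝ) < B + Nr := by linarith
    have h4 : (0:ℝ) < Nr - M := by linarith
    have h5 : (0:ℝ) < 1 + Lr := by linarith
    positivity
  -- the reversed strict inequality contradicting c1
  have hT : (Lr - A) * ((A + M) - Lr) * (B * (B + Nr)) <
      ((Lr + 1) - B) * ((B + Nr) - (Lr + 1)) * ((1 + A) * (1 + (A + M))) := by
    nlinarith [hP2', hP1, d7]
  linarith [c1, hT]
end

section
/- Let L ≥ 1, and fix nonnegative integers I_1,…,I_d. Suppose K and K' are two solutions of the system: h_{I_k}(K_k − 1) ≥ h_{I_j}(K_j) for all j, k; Σ_j K_j = Σ_j K'_j; 0 ≤ K_j, K'_j ≤ L, where h_n(a) = ((L−a)/(1+a))·((L−(a+n))/(1+(a+n))) is strictly decreasing. Then |K_j − K'_j| ≤ 1 for all 1 ≤ j ≤ d. -/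
noncomputable def HH (L n w : ℕ) : ℝ :=
  (((L:ℝ) - w) / (1 + w)) * (((L:ℝ) - (w + n)) / (1 + (w + n)))

noncomputable def Qp (M n u : ℝ) : ℝ := -2*u^2 + 2*(M+1-n)*u + (M-n)*(n-1)

lemma stepNat (L n w : ℕ) :
    HH L n w - HH L n (w+1) =
      (((L:ℝ)+1) * Qp ((L:ℝ)+1) n ((w:ℝ)+2)) /
        (((w:ℝ)+1)*((w:ℝ)+1+n)*(((w:ℝ)+2))*((w:ℝ)+2+n)) := by
  unfold HH Qp
  have h1 : (1:ℝ) + (w:ℝ) ≠ 0 := by positivity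
  have h2 : (1:ℝ) + ((w:ℝ) + n) ≠ 0 := by positivity
  have h3 : (1:ℝ) + ((w:ℝ)+1) ≠ 0 := by positivity
  have h4 : (1:ℝ) + (((w:ℝ)+1) + n) ≠ 0 := by positivity
  push_cast
  field_simp
  ring

lemma masterQ (M n w u : ℝ) (hn : 0 ≤ n) (hw : 2 ≤ w) (hu : w + 1 ≤ u)
    (hQ : 0 ≤ Qp M n u) : 0 < Qp M n w := by
  unfold Qp at *
  rcases le_or_gt ((M - n)*(n+3)) 4 with hc | hc
  · exfalso
    have hmn : M - n ≤ 4/3 := by nlinarith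
    nlinarith [sq_nonneg (u-3), mul_nonneg (show (0:ℝ) ≤ 4/3 - (M-n) by linarith)
      (show (0:ℝ) ≤ 2*u - 4 by nlinarith)]
  · nlinarith [mul_nonneg (show (0:ℝ) ≤ w - 2 by linarith) hQ,
      mul_pos (show (0:ℝ) < u - w by linarith) (show (0:ℝ) < (M-n)*(n+3) - 4 by linarith),
      mul_nonneg (mul_nonneg (show (0:ℝ) ≤ w - 2 by linarith)
        (show (0:ℝ) ≤ u - w by linarith)) (show (0:ℝ) ≤ u - 2 by linarith)]

lemma q_nonneg_of_self (L n E : ℕ) (hself : HH L n (E+1) ≤ HH L n E) :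
    0 ≤ Qp ((L:ℝ)+1) n ((E:ℝ)+2) := by
  have h := stepNat L n E
  have hd : (0:ℝ) < ((E:ℝ)+1)*((E:ℝ)+1+n)*(((E:ℝ)+2))*((E:ℝ)+2+n) := by positivity
  by_contra hQ
  push_neg at hQ
  have hnum : ((L:ℝ)+1) * Qp ((L:ℝ)+1) n ((E:ℝ)+2) < 0 :=
    mul_neg_of_pos_of_neg (by positivity) hQ
  have := div_neg_of_neg_of_pos hnum hd
  linarith [h ▸ sub_nonneg.2 hself]

lemma step_strict (L n w : ℕ) (hQ : 0 < Qp ((L:ℝ)+1) n ((w:ℝ)+2)) :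
    HH L n (w+1) < HH L n w := by
  have h := stepNat L n w
  have hd : (0:ℝ) < ((w:ℝ)+1)*((w:ℝ)+1+n)*(((w:ℝ)+2))*((w:ℝ)+2+n) := by positivity
  have : 0 < (((L:ℝ)+1) * Qp ((L:ℝ)+1) n ((w:ℝ)+2)) /
      (((w:ℝ)+1)*((w:ℝ)+1+n)*(((w:ℝ)+2))*((w:ℝ)+2+n)) :=
    div_pos (mul_pos (by positivity) hQ) hd
  linarith [h ▸ this]

lemma HH_strictAnti (L n : ℕ) (E : ℕ) (hself : HH L n (E+1) ≤ HH L n E) :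
    ∀ c : ℕ, c ≤ E → HH L n E ≤ HH L n c ∧ (c < E → HH L n E < HH L n c) := by
  have hQE := q_nonneg_of_self L n E hself
  have step : ∀ w : ℕ, w < E → HH L n (w+1) < HH L n w := by
    intro w hw
    refine step_strict L n w (masterQ _ _ _ _ (by positivity) (by linarith [Nat.cast_nonneg (α := ℝ) w]) ?_ hQE)
    have : (w:ℝ) + 1 ≤ (E:ℝ) := by exact_mod_cast Nat.succ_le_of_lt hw
    linarith
  have key : ∀ m : ℕ, ∀ c : ℕ, c + m ≤ E → HH L n (c + m) ≤ HH L n c := by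
    intro m
    induction m with
    | zero => intro c _; simp
    | succ p ih =>
      intro c hc
      have h1 : HH L n (c + p + 1) < HH L n (c + p) := step _ (by omega)
      have h2 := ih c (by omega)
      have : c + (p+1) = c + p + 1 := by omega
      rw [this]; linarith
  intro c hc
  constructor
  · have : E = c + (E - c) := by omega
    rw [this] at *; exact key _ _ (by omega)
  · intro hlt
    have h1 : HH L n E ≤ HH L n (c+1) := by
      have : E = (c+1) + (E - c - 1) := by omega
      rw [this]; exact key _ _ (by omega)
    have h2 : HH L n (c+1) < HH L n c := step c hlt
    linarith

lemma aux_le (d L : ℕ) (hL : 1 ≤ L)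
    (I K K' : Fin d → ℕ)
    (hsum : ∑ j, K j = ∑ j, K' j)
    (h : ℕ → ℝ → ℝ)
    (hdef : ∀ n : ℕ, ∀ a : ℝ, h n a =
      ((L - a) / (1 + a)) * ((L - (a + n)) / (1 + (a + n))))
    (hsys : ∀ j k : Fin d, h (I j) (K j) ≤ h (I k) ((K k : ℝ) - 1))
    (hsys' : ∀ j k : Fin d, h (I j) (K' j) ≤ h (I k) ((K' k : ℝ) - 1)) :
    ∀ j : Fin d, K j ≤ K' j + 1 := by
  have cast1 : ∀ (n w : ℕ), h n (w:ℝ) = HH L n w := by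
    intro n w; rw [hdef]; unfold HH; norm_num
  have cast2 : ∀ (n w : ℕ), 1 ≤ w → h n ((w:ℝ) - 1) = HH L n (w-1) := by
    intro n w hw
    have : ((w:ℝ) - 1) = (((w-1 : ℕ)):ℝ) := by
      rw [Nat.cast_sub hw]; norm_num
    rw [this, cast1]
  intro j
  by_contra hj
  push_neg at hj
  have hba : K' j + 2 ≤ K j := by omega
  have hex : ∃ k, K k < K' k := by
    by_contra hk
    push_neg at hk
    have : ∑ k, K' k < ∑ k, K k :=
      Finset.sum_lt_sum (fun i _ => hk i) ⟨j, Finset.mem_univ j, by omega⟩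
    omega
  obtain ⟨k, hce⟩ := hex
  set n := I j; set m := I k
  set a := K' j; set b := K j; set c := K k; set e := K' k
  have he1 : 1 ≤ e := by omega
  have hb1 : 1 ≤ b := by omega
  -- F1 : HH L n a ≤ HH L m (e-1)
  have F1 : HH L n a ≤ HH L m (e-1) := by
    have := hsys' j k; rwa [cast1, cast2 _ _ he1] at this
  -- F2 : self at e-1
  have F2 : HH L m ((e-1)+1) ≤ HH L m (e-1) := by
    have := hsys' k k; rw [cast1, cast2 _ _ he1] at this
    have he : (e-1)+1 = e := by omega
    rwa [he]
  have F2' : HH L m (e-1) ≤ HH L m c := (HH_strictAnti L m (e-1) F2 c (by omega)).1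
  -- F3
  have F3 : HH L m c ≤ HH L n (b-1) := by
    have := hsys k j; rwa [cast1, cast2 _ _ hb1] at this
  -- F4 : self at b-1, strict decrease to a
  have F4 : HH L n ((b-1)+1) ≤ HH L n (b-1) := by
    have := hsys j j; rw [cast1, cast2 _ _ hb1] at this
    have hb : (b-1)+1 = b := by omega
    rwa [hb]
  have F4' : HH L n (b-1) < HH L n a := (HH_strictAnti L n (b-1) F4 a (by omega)).2 (by omega)
  linarith

theorem solutions_close (d L : ℕ) (hL : 1 ≤ L)
    (I K K' : Fin d → ℕ)
    (hKL : ∀ j, K j ≤ L) (hK'L : ∀ j, K' j ≤ L)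
    (hsum : ∑ j, K j = ∑ j, K' j)
    (h : ℕ → ℝ → ℝ)
    (hdef : ∀ n : ℕ, ∀ a : ℝ, h n a =
      ((L - a) / (1 + a)) * ((L - (a + n)) / (1 + (a + n))))
    (hsys : ∀ j k : Fin d, h (I j) (K j) ≤ h (I k) ((K k : ℝ) - 1))
    (hsys' : ∀ j k : Fin d, h (I j) (K' j) ≤ h (I k) ((K' k : ℝ) - 1)) :
    ∀ j : Fin d, |(K j : ℤ) - (K' j : ℤ)| ≤ 1 := by
  have h1 := aux_le d L hL I K K' hsum h hdef hsys hsys'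
  have h2 := aux_le d L hL I K' K hsum.symm h hdef hsys' hsys
  intro j
  have := h1 j
  have := h2 j
  rw [abs_le]
  omega
end

section
/- Let X be a real random variable with |X| ≤ R almost surely and E[X] = 0. Then there exists γ_0 > 0 (depending only on R) such that for all 0 < γ ≤ γ_0 and all n ≥ 1, E[exp(γ n (S_n/n)²)] ≤ 2, where S_n is the sum of n i.i.d. copies of X. Equivalently, log E[exp(γ n (S_n/n)²)] is bounded uniformly in n for γ small enough. -/
/-!
By Hoeffding's lemma each `X i` is sub-Gaussian with variance proxy `R²`, so `Sₙ` is sub-Gaussian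
with proxy `n R²`. For a sub-Gaussian `S` with proxy `c`, writing `exp (θ S²)` as the Gaussian
average of `exp (√(2θ) S z)` and exchanging the two integrals gives
`E[exp (θ S²)] ≤ (1 - 2cθ)^(-1/2)`. With `θ = γ / n` the bound `(1 - 2γR²)^(-1/2)` no longer
depends on `n`, and it is at most `2` as soon as `γ R² ≤ 3/8`.
-/

open MeasureTheory ProbabilityTheory Finset Real
open scoped NNReal

theorem integral_exp_mul_sub_sq_div_two (a : ℝ) :
    ∫ z : ℝ, exp (a * z - z ^ 2 / 2) = √(2 * π) * exp (a ^ 2 / 2) := by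
  have h_complete : ∀ z : ℝ, a * z - z ^ 2 / 2 = a ^ 2 / 2 + -(1 / 2) * (z - a) ^ 2 := by
    intro z; ring
  simp_rw [h_complete, exp_add, integral_const_mul,
    integral_sub_right_eq_self (fun z ↦ exp (-(1 / 2) * z ^ 2)) a, integral_gaussian]
  rw [show π / (1 / 2) = 2 * π by ring, mul_comm]

namespace ProbabilityTheory.HasSubgaussianMGF

variable {Ω : Type*} [MeasurableSpace Ω] {μ : Measure Ω} {X : Ω → ℝ} {c : ℝ≥0}

theorem integral_exp_mul_mul_sub_sq_le (h : HasSubgaussianMGF X c μ) (s z : ℝ) :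
    ∫ ω, exp (s * X ω * z - z ^ 2 / 2) ∂μ ≤ exp (-((1 - c * s ^ 2) / 2) * z ^ 2) :=
  calc ∫ ω, exp (s * X ω * z - z ^ 2 / 2) ∂μ
      = mgf X μ (s * z) * exp (-(z ^ 2 / 2)) := by
        rw [mgf, ← integral_mul_const]
        congr with ω
        rw [← exp_add]
        ring_nf
    _ ≤ exp (c * (s * z) ^ 2 / 2) * exp (-(z ^ 2 / 2)) := by
        gcongr
        exact h.mgf_le _
    _ = exp (-((1 - c * s ^ 2) / 2) * z ^ 2) := by
        rw [← exp_add]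
        ring_nf

theorem integrable_uncurry_exp_mul_mul_sub_sq [SFinite μ] (h : HasSubgaussianMGF X c μ) {s : ℝ}
    (hs : c * s ^ 2 < 1) :
    Integrable (Function.uncurry fun (z : ℝ) ω ↦ exp (s * X ω * z - z ^ 2 / 2))
      ((volume : Measure ℝ).prod μ) := by
  have h_meas : AEStronglyMeasurable
      (Function.uncurry fun (z : ℝ) ω ↦ exp (s * X ω * z - z ^ 2 / 2))
      ((volume : Measure ℝ).prod μ) := by
    have hX : AEMeasurable (fun p : ℝ × Ω ↦ X p.2) ((volume : Measure ℝ).prod μ) :=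
      h.aemeasurable.comp_snd
    exact (((hX.const_mul s).mul measurable_fst.aemeasurable).sub
      ((measurable_fst.pow_const 2).div_const 2).aemeasurable).exp.aestronglyMeasurable
  rw [integrable_prod_iff h_meas]
  refine ⟨ae_of_all _ fun z ↦ ?_, ?_⟩
  · convert (h.integrable_exp_mul (s * z)).mul_const (exp (-(z ^ 2 / 2))) using 2 with ω
    rw [Function.uncurry_apply_pair, ← exp_add]
    ring_nf
  · refine (integrable_exp_neg_mul_sq (b := (1 - c * s ^ 2) / 2) (by linarith)).mono'
      h_meas.norm.integral_prod_right' (ae_of_all _ fun z ↦ ?_)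
    simp only [Function.uncurry_apply_pair, norm_eq_abs, abs_exp]
    rw [abs_of_nonneg (integral_nonneg fun _ ↦ (exp_pos _).le)]
    exact h.integral_exp_mul_mul_sub_sq_le s z

theorem integral_exp_mul_sq_le [SFinite μ] (h : HasSubgaussianMGF X c μ) {θ : ℝ} (hθ : 0 ≤ θ)
    (hθc : 2 * c * θ < 1) :
    ∫ ω, exp (θ * X ω ^ 2) ∂μ ≤ (√(1 - 2 * c * θ))⁻¹ := by
  set s := √(2 * θ)
  have hs : s ^ 2 = 2 * θ := sq_sqrt (by positivity)
  have hcs : c * s ^ 2 < 1 := by rw [hs]; linarith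
  have h_linearize (ω : Ω) : exp (θ * X ω ^ 2)
      = (√(2 * π))⁻¹ * ∫ z : ℝ, exp (s * X ω * z - z ^ 2 / 2) := by
    rw [integral_exp_mul_sub_sq_div_two, inv_mul_cancel_left₀ (by positivity), mul_pow, hs]
    ring_nf
  calc ∫ ω, exp (θ * X ω ^ 2) ∂μ
      = (√(2 * π))⁻¹ * ∫ z : ℝ, ∫ ω, exp (s * X ω * z - z ^ 2 / 2) ∂μ := by
        simp_rw [h_linearize, integral_const_mul,
          integral_integral_swap (h.integrable_uncurry_exp_mul_mul_sub_sq hcs)]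
    _ ≤ (√(2 * π))⁻¹ * ∫ z : ℝ, exp (-((1 - c * s ^ 2) / 2) * z ^ 2) := by
        gcongr
        · exact (h.integrable_uncurry_exp_mul_mul_sub_sq hcs).integral_prod_left
        · exact integrable_exp_neg_mul_sq (by linarith)
        · exact fun z ↦ h.integral_exp_mul_mul_sub_sq_le s z
    _ = (√(1 - 2 * c * θ))⁻¹ := by
        rw [integral_gaussian, hs, ← sqrt_inv, ← sqrt_mul (by positivity), ← sqrt_inv]
        congr 1
        field_simp

end ProbabilityTheory.HasSubgaussianMGF

theorem ProbabilityTheory.hasSubgaussianMGF_of_abs_le_of_integral_eq_zero {Ω : Type*}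
    [MeasurableSpace Ω] {μ : Measure Ω} [IsProbabilityMeasure μ] {X : Ω → ℝ} {R : ℝ}
    (hm : AEMeasurable X μ) (hb : ∀ᵐ ω ∂μ, |X ω| ≤ R) (hc : μ[X] = 0) :
    HasSubgaussianMGF X (‖R‖₊ ^ 2) μ := by
  convert hasSubgaussianMGF_of_mem_Icc_of_integral_eq_zero hm (hb.mono fun _ ↦ abs_le.1) hc
    using 1
  rw [sub_neg_eq_add, ← two_mul, nnnorm_mul, nnnorm_two, mul_div_cancel_left₀ _ two_ne_zero]

theorem uniform_exp_moment_of_squared_mean_general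
    {Ω : Type*} [MeasurableSpace Ω] (μ : Measure Ω) [IsProbabilityMeasure μ]
    (R : ℝ) (hR : 0 < R)
    (X : ℕ → Ω → ℝ)
    (hmeas : ∀ i, Measurable (X i))
    (hindep : iIndepFun X μ)
    (hbdd : ∀ i, ∀ᵐ ω ∂μ, |X i ω| ≤ R)
    (hmean : ∀ i, ∫ ω, X i ω ∂μ = 0) :
    ∃ γ₀ > 0, ∀ γ : ℝ, 0 < γ → γ ≤ γ₀ → ∀ n : ℕ, 1 ≤ n →
      ∫ ω, Real.exp (γ * n * ((∑ i ∈ range n, X i ω) / n) ^ 2) ∂μ ≤ 2 := by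
  refine ⟨3 / (8 * R ^ 2), by positivity, fun γ hγ hγ₀ n hn ↦ ?_⟩
  have h_sum := HasSubgaussianMGF.sum_of_iIndepFun hindep (s := range n) fun i _ ↦
    hasSubgaussianMGF_of_abs_le_of_integral_eq_zero (hmeas i).aemeasurable (hbdd i) (hmean i)
  have hn₀ : (0 : ℝ) < n := by exact_mod_cast hn
  have h_param : 2 * ((∑ _i ∈ range n, ‖R‖₊ ^ 2 : ℝ≥0) : ℝ) * (γ / n) = 2 * γ * R ^ 2 := by
    push_cast
    rw [sum_const, card_range, nsmul_eq_mul, norm_eq_abs, sq_abs]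
    field_simp
  have hγR : 2 * γ * R ^ 2 ≤ 3 / 4 := by
    rw [le_div_iff₀ (by positivity)] at hγ₀
    linarith
  calc ∫ ω, exp (γ * n * ((∑ i ∈ range n, X i ω) / n) ^ 2) ∂μ
      = ∫ ω, exp (γ / n * (∑ i ∈ range n, X i ω) ^ 2) ∂μ := by
        congr with ω
        field_simp
    _ ≤ (√(1 - 2 * γ * R ^ 2))⁻¹ := by
        rw [← h_param]
        exact h_sum.integral_exp_mul_sq_le (by positivity) (by rw [h_param]; linarith)
    _ ≤ 2 := by
        refine inv_le_of_inv_le₀ (by norm_num) ((le_sqrt' (by norm_num)).2 ?_)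
        linarith

theorem uniform_exp_moment_of_squared_mean
    {Ω : Type*} [MeasurableSpace Ω] (μ : Measure Ω) [IsProbabilityMeasure μ]
    (R : ℝ) (hR : 0 < R)
    (X : ℕ → Ω → ℝ)
    (hmeas : ∀ i, Measurable (X i))
    (hindep : iIndepFun X μ)
    (hident : ∀ i, μ.map (X i) = μ.map (X 0))
    (hbdd : ∀ i, ∀ᵐ ω ∂μ, |X i ω| ≤ R)
    (hmean : ∀ i, ∫ ω, X i ω ∂μ = 0) :
    ∃ γ₀ > 0, ∀ γ : ℝ, 0 < γ → γ ≤ γ₀ → ∀ n : ℕ, 1 ≤ n →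
      ∫ ω, Real.exp (γ * n * ((∑ i ∈ range n, X i ω) / n) ^ 2) ∂μ ≤ 2 :=
  uniform_exp_moment_of_squared_mean_general μ R hR X hmeas hindep hbdd hmean
end
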